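/- Let G be a finite undirected graph with disjoint vertex sets S and T, and let Z_1,...,Z_k be the drainage of (G,S,T). Then for every 1 ≤ i ≤ k, the set R(Z_i,S) of vertices reachable from S in G \ Z_i equals the disjoint union R_1 ∪ R_2 ∪ ... ∪ R_i of the layer sets of the drainage construction. -/

import Mathlib

/-!
A minimum cut is *anchored*: each of its elements is an edge of `G` with an endpoint in
`R(Z, S)`, for otherwise dropping that element leaves a smaller cut. If `X` is anchored with
`A = R(X, S)`, and `Y` is anchored in `G` deprived of `A` with sources `S'`, the endpoints of `X`
outside `A`, then a search from `S` avoiding `Y` sweeps all of `A` (no element of `Y` touches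
`A`), leaves `A` only along edges of `X`, i.e. into `S'`, and continues in `G` deprived of `A`:
`R(Y, S) = A ∪ R_{G - A}(Y, S')`. Induction along the drainage gives both the anchoring of every
`Z_i` and the union formula; a layer `R_{j'}` lies outside `R(Z_{j'-1}, S)`, which contains all
earlier layers.
-/

open SimpleGraph

variable {V : Type*}

/-- `X` is an edge `(S,T)`-cut: after deleting the edges of `X`,
no vertex of `S` can reach a vertex of `T`. -/
def EdgeCut (G : SimpleGraph V) (S T : Set V) (X : Finset (Sym2 V)) : Prop :=
  ∀ s ∈ S, ∀ t ∈ T, ¬ (G.deleteEdges ↑X).Reachable s t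

/-- `X` is a minimum edge `(S,T)`-cut. -/
def MinEdgeCut (G : SimpleGraph V) (S T : Set V) (X : Finset (Sym2 V)) : Prop :=
  EdgeCut G S T X ∧ ∀ Y : Finset (Sym2 V), EdgeCut G S T Y → X.card ≤ Y.card

/-- `R(X,S)`: vertices reachable from `S` in `G` deprived of the edges of `X`. -/
def Rside (G : SimpleGraph V) (X : Finset (Sym2 V)) (S : Set V) : Set V :=
  {v | ∃ s ∈ S, (G.deleteEdges ↑X).Reachable s v}

/-- A minimum closest `(S,T)`-cut: a minimum cut `Z` such that no other cut `X'`
satisfies `|X'| ≤ |Z|` and `R(X',S) ⊆ R(Z,S)`. -/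
def MinClosestCut (G : SimpleGraph V) (S T : Set V) (Z : Finset (Sym2 V)) : Prop :=
  MinEdgeCut G S T Z ∧
    ∀ X' : Finset (Sym2 V), EdgeCut G S T X' → X' ≠ Z →
      ¬ (X'.card ≤ Z.card ∧ Rside G X' S ⊆ Rside G Z S)

/-- `G` deprived of the vertex set `U` (kept on the same vertex type). -/
def deprive (G : SimpleGraph V) (U : Set V) : SimpleGraph V where
  Adj u v := G.Adj u v ∧ u ∉ U ∧ v ∉ U
  symm := ⟨fun _ _ ⟨h, hu, hv⟩ => ⟨h.symm, hv, hu⟩⟩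
  loopless := ⟨fun u ⟨h, _, _⟩ => G.loopless.irrefl u h⟩

/-- `V^T(Z)` relative to sources `S`: the endpoints of edges of `Z` that are not
reachable from `S` once `Z` is removed. -/
def nextSources (G : SimpleGraph V) (Z : Finset (Sym2 V)) (S : Set V) : Set V :=
  {v | v ∉ Rside G Z S ∧ ∃ u, s(u, v) ∈ Z}

/-- The drainage `Z 1, ..., Z k` of the instance `(G,S,T)` with minimum cut size `p`:
`Z 1` is the minimum closest `(S,T)`-cut, and `Z (i+1)` is the minimum closest
`(S_{i+1},T)`-cut of size `p` in `G` deprived of `R(Z i, S)`; the construction stops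
at `k`, when no further cut of size `p` exists. -/
def IsDrainage (G : SimpleGraph V) (S T : Set V) (p k : ℕ)
    (Z : ℕ → Finset (Sym2 V)) : Prop :=
  1 ≤ k ∧
  MinClosestCut G S T (Z 1) ∧ (Z 1).card = p ∧
  (∀ i, 1 ≤ i → i < k →
    MinClosestCut (deprive G (Rside G (Z i) S)) (nextSources G (Z i) S) T (Z (i + 1)) ∧
      (Z (i + 1)).card = p) ∧
  (∀ X : Finset (Sym2 V),
    EdgeCut (deprive G (Rside G (Z k) S)) (nextSources G (Z k) S) T X → p < X.card)

/-- The layer `R_j` of the drainage construction: `R_1 = R(Z_1, S)` and, for `j ≥ 2`,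
`R_j` is the set of vertices reachable from `S_j` in `G` deprived of `R(Z_{j-1}, S)`
after deleting `Z_j`. -/
def drainLayer (G : SimpleGraph V) (S : Set V) (Z : ℕ → Finset (Sym2 V)) (j : ℕ) :
    Set V :=
  if j ≤ 1 then Rside G (Z 1) S
  else Rside (deprive G (Rside G (Z (j - 1)) S)) (Z j) (nextSources G (Z (j - 1)) S)

section Rside

variable {G : SimpleGraph V} {S T : Set V} {X : Finset (Sym2 V)}

lemma subset_Rside : S ⊆ Rside G X S :=
  fun s hs => ⟨s, hs, .refl s⟩

lemma Rside_closed {x y : V} (hx : x ∈ Rside G X S) (hxy : G.Adj x y) (hX : s(x, y) ∉ X) :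
    y ∈ Rside G X S := by
  obtain ⟨s, hs, hr⟩ := hx
  exact ⟨s, hs, hr.trans (Adj.reachable ((deleteEdges_adj ..).mpr ⟨hxy, hX⟩))⟩

lemma Rside_subset_of_closed {W : Set V} (hSW : S ⊆ W)
    (hW : ∀ x ∈ Rside G X S, x ∈ W → ∀ y, G.Adj x y → s(x, y) ∉ X → y ∈ W) :
    Rside G X S ⊆ W := by
  rintro v ⟨s, hs, hsv⟩
  induction (reachable_iff_reflTransGen s v).mp hsv with
  | refl => exact hSW hs
  | @tail x y hsx hxy ih =>
    have hsx := (reachable_iff_reflTransGen s x).mpr hsx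
    rw [deleteEdges_adj] at hxy
    exact hW x ⟨s, hs, hsx⟩ (ih hsx) y hxy.1 hxy.2

lemma edgeCut_iff_disjoint : EdgeCut G S T X ↔ Disjoint (Rside G X S) T := by
  simp only [EdgeCut, Rside, Set.disjoint_left]
  grind

lemma Rside_deprive_disjoint {U : Set V} (hS : Disjoint S U) :
    Disjoint (Rside (deprive G U) X S) U :=
  Set.subset_compl_iff_disjoint_right.mp <|
    Rside_subset_of_closed (Set.subset_compl_iff_disjoint_right.mpr hS)
      fun _ _ _ _ hxy _ => hxy.2.2

end Rside

section Anchored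

variable {G : SimpleGraph V} {S T U : Set V} {X Y : Finset (Sym2 V)}

def IsAnchored (G : SimpleGraph V) (S : Set V) (X : Finset (Sym2 V)) : Prop :=
  ∀ e ∈ X, ∃ x ∈ Rside G X S, ∃ y, G.Adj x y ∧ s(x, y) = e

lemma EdgeCut.mono (h : EdgeCut G S T X) (hYX : Rside G Y S ⊆ Rside G X S) :
    EdgeCut G S T Y :=
  edgeCut_iff_disjoint.mpr ((edgeCut_iff_disjoint.mp h).mono_left hYX)

lemma Rside_erase_subset [DecidableEq V] {e : Sym2 V}
    (he : ∀ x ∈ Rside G X S, ∀ y, G.Adj x y → s(x, y) ≠ e) :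
    Rside G (X.erase e) S ⊆ Rside G X S :=
  Rside_subset_of_closed subset_Rside fun x _ hx y hxy hxe =>
    Rside_closed hx hxy fun hX => hxe (Finset.mem_erase.mpr ⟨he x hx y hxy, hX⟩)

lemma MinEdgeCut.isAnchored (h : MinEdgeCut G S T X) : IsAnchored G S X := by
  classical
  intro e he
  by_contra! hfar
  have hcard := h.2 _ (h.1.mono (Rside_erase_subset hfar))
  have := Finset.card_erase_lt_of_mem he
  omega

lemma IsAnchored.mk_notMem_of_left_mem (hY : IsAnchored (deprive G U) S Y) {x y : V}
    (hx : x ∈ U) : s(x, y) ∉ Y := by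
  intro hxy
  obtain ⟨a, -, b, ⟨-, ha, hb⟩, hab⟩ := hY _ hxy
  rcases Sym2.eq_iff.mp hab with ⟨rfl, -⟩ | ⟨-, rfl⟩
  exacts [ha hx, hb hx]

lemma IsAnchored.exists_adj_of_mem_nextSources (hX : IsAnchored G S X) {v : V}
    (hv : v ∈ nextSources G X S) : ∃ u ∈ Rside G X S, G.Adj u v ∧ s(u, v) ∈ X := by
  obtain ⟨hvR, u, huv⟩ := hv
  obtain ⟨x, hx, y, hxy, hxye⟩ := hX _ huv
  rcases Sym2.eq_iff.mp hxye with ⟨rfl, rfl⟩ | ⟨rfl, -⟩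
  exacts [⟨x, hx, hxy, huv⟩, absurd hx hvR]

end Anchored

section Deprive

variable {G H : SimpleGraph V} {S S' : Set V} {X Y : Finset (Sym2 V)}

lemma deprive_le (U : Set V) : deprive G U ≤ G :=
  fun _ _ h => h.1

lemma Rside_subset_Rside_of_le (hHG : H ≤ G) (hS' : S' ⊆ Rside G Y S) :
    Rside H Y S' ⊆ Rside G Y S :=
  Rside_subset_of_closed hS' fun _ _ hx _ hxy hxyY => Rside_closed hx (hHG hxy) hxyY

lemma Rside_subset_Rside_of_anchored (hY : IsAnchored (deprive G (Rside G X S)) S' Y) :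
    Rside G X S ⊆ Rside G Y S :=
  Rside_subset_of_closed subset_Rside fun _ hxX hxY _ hxy _ =>
    Rside_closed hxY hxy (hY.mk_notMem_of_left_mem hxX)

lemma nextSources_subset_Rside (hX : IsAnchored G S X)
    (hY : IsAnchored (deprive G (Rside G X S)) S' Y) : nextSources G X S ⊆ Rside G Y S := by
  intro v hv
  obtain ⟨u, hu, huv, -⟩ := hX.exists_adj_of_mem_nextSources hv
  exact Rside_closed (Rside_subset_Rside_of_anchored hY hu) huv (hY.mk_notMem_of_left_mem hu)

lemma Rside_subset_union_Rside_deprive :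
    Rside G Y S ⊆ Rside G X S ∪ Rside (deprive G (Rside G X S)) Y (nextSources G X S) := by
  refine Rside_subset_of_closed (subset_Rside.trans Set.subset_union_left) ?_
  intro x _ hx y hxy hxyY
  by_cases hy : y ∈ Rside G X S
  · exact .inl hy
  refine .inr ?_
  rcases hx with hx | hx
  · have hxyX : s(x, y) ∈ X := by_contra fun h => hy (Rside_closed hx hxy h)
    exact subset_Rside ⟨hy, x, hxyX⟩
  · have hxR : x ∉ Rside G X S :=
      Set.disjoint_left.mp (Rside_deprive_disjoint (Set.disjoint_left.mpr fun _ h => h.1)) hx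
    exact Rside_closed hx ⟨hxy, hxR, hy⟩ hxyY

lemma Rside_eq_union_Rside_deprive (hX : IsAnchored G S X)
    (hY : IsAnchored (deprive G (Rside G X S)) (nextSources G X S) Y) :
    Rside G Y S = Rside G X S ∪ Rside (deprive G (Rside G X S)) Y (nextSources G X S) :=
  Rside_subset_union_Rside_deprive.antisymm <| Set.union_subset
    (Rside_subset_Rside_of_anchored hY)
    (Rside_subset_Rside_of_le (deprive_le _) (nextSources_subset_Rside hX hY))

lemma IsAnchored.of_deprive (hX : IsAnchored G S X)
    (hY : IsAnchored (deprive G (Rside G X S)) (nextSources G X S) Y) : IsAnchored G S Y := by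
  intro e he
  obtain ⟨x, hx, y, hxy, rfl⟩ := hY e he
  exact ⟨x, Rside_subset_Rside_of_le (deprive_le _) (nextSources_subset_Rside hX hY) hx,
    y, hxy.1, rfl⟩

end Deprive

section Drainage

variable {G : SimpleGraph V} {S T : Set V} {p k i : ℕ} {Z : ℕ → Finset (Sym2 V)}

lemma drainLayer_one : drainLayer G S Z 1 = Rside G (Z 1) S :=
  if_pos le_rfl

lemma drainLayer_add_one (hi : 1 ≤ i) :
    drainLayer G S Z (i + 1) =
      Rside (deprive G (Rside G (Z i) S)) (Z (i + 1)) (nextSources G (Z i) S) := by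
  rw [drainLayer, if_neg (by omega), Nat.add_sub_cancel]

lemma IsDrainage.isAnchored (hZ : IsDrainage G S T p k Z) (hi : 1 ≤ i) (hik : i ≤ k) :
    IsAnchored G S (Z i) := by
  induction i, hi using Nat.le_induction with
  | base => exact hZ.2.1.1.isAnchored
  | succ i hi ih => exact (ih (by omega)).of_deprive (hZ.2.2.2.1 i hi hik).1.1.isAnchored

lemma IsDrainage.Rside_eq_biUnion_drainLayer (hZ : IsDrainage G S T p k Z) (hi : 1 ≤ i)
    (hik : i ≤ k) : Rside G (Z i) S = ⋃ j ∈ Finset.Icc 1 i, drainLayer G S Z j := by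
  induction i, hi using Nat.le_induction with
  | base => simp [drainLayer_one]
  | succ i hi ih =>
    rw [← Finset.insert_Icc_right_eq_Icc_add_one (by omega), Finset.set_biUnion_insert,
      ← ih (by omega), drainLayer_add_one hi, Set.union_comm]
    exact Rside_eq_union_Rside_deprive (hZ.isAnchored hi (by omega))
      (hZ.2.2.2.1 i hi hik).1.1.isAnchored

lemma IsDrainage.disjoint_drainLayer (hZ : IsDrainage G S T p k Z) {j j' : ℕ} (hj : 1 ≤ j)
    (hjj' : j < j') (hj'k : j' ≤ k) : Disjoint (drainLayer G S Z j) (drainLayer G S Z j') := by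
  obtain ⟨i, rfl⟩ : ∃ i, j' = i + 1 := ⟨j' - 1, by omega⟩
  rw [drainLayer_add_one (by omega)]
  refine (Rside_deprive_disjoint (Set.disjoint_left.mpr fun _ h => h.1)).symm.mono_left ?_
  rw [hZ.Rside_eq_biUnion_drainLayer (by omega) (by omega)]
  exact Set.subset_biUnion_of_mem (u := fun j => drainLayer G S Z j)
    (Finset.mem_Icc.mpr ⟨hj, by omega⟩)

end Drainage

theorem drainage_reachable_eq_union_layers_general
    (G : SimpleGraph V) (S T : Set V)
    (p k : ℕ) (Z : ℕ → Finset (Sym2 V)) (hZ : IsDrainage G S T p k Z) :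
    (∀ i, 1 ≤ i → i ≤ k →
      Rside G (Z i) S = ⋃ j ∈ Finset.Icc 1 i, drainLayer G S Z j) ∧
    (∀ j j', 1 ≤ j → j < j' → j' ≤ k → Disjoint (drainLayer G S Z j) (drainLayer G S Z j')) :=
  ⟨fun _ => hZ.Rside_eq_biUnion_drainLayer, fun _ _ => hZ.disjoint_drainLayer⟩

/-- For every `1 ≤ i ≤ k`, `R(Z_i, S)` is the disjoint union of the
layers `R_1, ..., R_i` of the drainage construction. -/
theorem drainage_reachable_eq_union_layers
    [Fintype V] (G : SimpleGraph V) (S T : Set V)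
    (hST : Disjoint S T) (hS : S.Nonempty) (hT : T.Nonempty)
    (p k : ℕ) (Z : ℕ → Finset (Sym2 V)) (hZ : IsDrainage G S T p k Z) :
    (∀ i, 1 ≤ i → i ≤ k →
      Rside G (Z i) S = ⋃ j ∈ Finset.Icc 1 i, drainLayer G S Z j) ∧
    (∀ j j', 1 ≤ j → j < j' → j' ≤ k → Disjoint (drainLayer G S Z j) (drainLayer G S Z j')) :=
  drainage_reachable_eq_union_layers_general G S T p k Z hZ
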